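/- Let L be an n×n Laplacian matrix with eigenprojection J̄ = L^⊢. For each δ > 0 let v(δ) ∈ ℝⁿ be a vector with nonnegative entries and s(δ) = Σᵢ v(δ)ᵢ > 0. Suppose δ/s(δ) → 0 as δ → 0⁺ and v(δ)/s(δ) converges to a vector ṽ ∈ ℝⁿ as δ → 0⁺. Then the eigenprojection of L₀ + H_{δ,v(δ)} converges, as δ → 0⁺, to the rank-one matrix 1′·[ṽᵀJ̄ 0] (the outer product of the all-ones column vector 1′ of length n+1 with the row vector whose first n entries are ṽᵀJ̄ and whose last entry is 0). -/

import Mathlib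

open Matrix Filter Topology

/-- The index of a square real matrix: the smallest `k` with
`rank (A^(k+1)) = rank (A^k)`. -/
noncomputable def matIndex {m : Type*} [Fintype m] [DecidableEq m]
    (A : Matrix m m ℝ) : ℕ :=
  sInf {k : ℕ | (A ^ (k + 1)).rank = (A ^ k).rank}

/-- `Q` is the eigenprojection of `A` corresponding to the eigenvalue `0`:
an idempotent matrix whose range is the null space of `A ^ ind A` and whose
null space is the range of `A ^ ind A`. -/
def IsEigenprojection {m : Type*} [Fintype m] [DecidableEq m]
    (A Q : Matrix m m ℝ) : Prop :=
  Q * Q = Q ∧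
  LinearMap.range Q.mulVecLin = LinearMap.ker (A ^ matIndex A).mulVecLin ∧
  LinearMap.ker Q.mulVecLin = LinearMap.range (A ^ matIndex A).mulVecLin

/-- A Laplacian matrix: nonpositive off-diagonal entries and zero row sums. -/
def IsLaplacian {m : Type*} [Fintype m] (L : Matrix m m ℝ) : Prop :=
  (∀ i j, i ≠ j → L i j ≤ 0) ∧ ∀ i, ∑ j, L i j = 0

/-- The block matrix `L₀ = [[L, 0], [0ᵀ, 0]]`. -/
def hubL0 {n : ℕ} (L : Matrix (Fin n) (Fin n) ℝ) :
    Matrix (Fin n ⊕ Unit) (Fin n ⊕ Unit) ℝ :=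
  Matrix.fromBlocks L 0 0 0

/-- The block matrix `H_I = [[I, -1], [0ᵀ, 0]]`. -/
def hubHI (n : ℕ) : Matrix (Fin n ⊕ Unit) (Fin n ⊕ Unit) ℝ :=
  Matrix.fromBlocks 1 (Matrix.of fun _ _ => (-1 : ℝ)) 0 0

/-- The block matrix `H_v = [[0, 0], [-vᵀ, s]]` where `s = Σᵢ vᵢ`. -/
def hubHv {n : ℕ} (v : Fin n → ℝ) : Matrix (Fin n ⊕ Unit) (Fin n ⊕ Unit) ℝ :=
  Matrix.fromBlocks 0 0 (Matrix.of fun _ j => -v j) (Matrix.of fun _ _ => ∑ i, v i)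

/-- `H_{δ,v} = δ·H_I + H_v`. -/
def hubH {n : ℕ} (δ : ℝ) (v : Fin n → ℝ) :
    Matrix (Fin n ⊕ Unit) (Fin n ⊕ Unit) ℝ :=
  δ • hubHI n + hubHv v

/-!
For `δ > 0` the matrix `M = L₀ + H_{δ,v}` has zero row sums and its leading block `L + δ` is
invertible (a Laplacian is diagonally dominant), so `ker M` is spanned by `1′`; and
`u = (δ / s) [vᵀ(L + δ)⁻¹, 1]` is a left null vector of `M` with `u ⬝ 1′ = 1 + δ / s ≠ 0`. Hence `M`
has index one and its eigenprojection is the rank-one matrix `1′ uᵀ / (1 + δ / s)`.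
As `δ → 0⁺`, `δ (L + δ)⁻¹ → J̄`: a Laplacian has index one, and `δ (L + δ)⁻¹` is a contraction for
the sup norm, fixes `ker L` and is `O(δ)` on `range L`. Therefore `u → [ṽᵀJ̄, 0]` and
`1 + δ / s → 1`.
-/

open Module

section Eigenprojection

variable {m : Type*} [Fintype m]

theorem Matrix.rank_add_finrank_ker_mulVecLin (A : Matrix m m ℝ) :
    A.rank + finrank ℝ (LinearMap.ker A.mulVecLin) = Fintype.card m := by
  rw [Matrix.rank, LinearMap.finrank_range_add_finrank_ker, finrank_fintype_fun_eq_card]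

variable [DecidableEq m]

theorem IsEigenprojection.unique {A P Q : Matrix m m ℝ} (hP : IsEigenprojection A P)
    (hQ : IsEigenprojection A Q) : P = Q := by
  have hidem {R : Matrix m m ℝ} (h : R * R = R) : IsIdempotentElem R.mulVecLin := by
    show R.mulVecLin ∘ₗ R.mulVecLin = R.mulVecLin
    rw [← mulVecLin_mul, h]
  exact Matrix.toLin'.injective <| LinearMap.IsIdempotentElem.ext (hidem hP.1) (hidem hQ.1)
    ⟨hP.2.1.trans hQ.2.1.symm, hP.2.2.trans hQ.2.2.symm⟩

theorem matIndex_eq_one {A : Matrix m m ℝ} (hsq : ∀ x, A *ᵥ (A *ᵥ x) = 0 → A *ᵥ x = 0)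
    (hsing : ∃ x ≠ 0, A *ᵥ x = 0) : matIndex A = 1 := by
  have hker : LinearMap.ker (A ^ 2).mulVecLin = LinearMap.ker A.mulVecLin := by
    ext x
    simp only [LinearMap.mem_ker, mulVecLin_apply, sq, ← mulVec_mulVec]
    exact ⟨hsq x, fun h => by rw [h, mulVec_zero]⟩
  have hkerA : finrank ℝ (LinearMap.ker A.mulVecLin) ≠ 0 := by
    obtain ⟨x, hx, hAx⟩ := hsing
    rw [Ne, Submodule.finrank_eq_zero]
    exact (Submodule.ne_bot_iff _).2 ⟨x, hAx, hx⟩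
  have h1 : (A ^ (1 + 1)).rank = (A ^ 1).rank := by
    have h2 := rank_add_finrank_ker_mulVecLin (A ^ 2)
    rw [hker] at h2
    have := rank_add_finrank_ker_mulVecLin A
    rw [one_add_one_eq_two, pow_one]
    omega
  have h0 : (A ^ (0 + 1)).rank ≠ (A ^ 0).rank := by
    have := rank_add_finrank_ker_mulVecLin A
    rw [zero_add, pow_one, pow_zero, rank_one]
    omega
  refine le_antisymm (Nat.sInf_le h1) (Nat.one_le_iff_ne_zero.2 fun h => ?_)
  rcases Nat.sInf_eq_zero.1 h with h | h
  · exact h0 h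
  · exact (Set.eq_empty_iff_forall_notMem.1 h) 1 h1

theorem matIndex_eq_one_of_ker_eq_span {M : Matrix m m ℝ} {x u : m → ℝ}
    (hker : LinearMap.ker M.mulVecLin = ℝ ∙ x) (hx : x ≠ 0) (hu : u ᵥ* M = 0)
    (hux : u ⬝ᵥ x ≠ 0) : matIndex M = 1 := by
  refine matIndex_eq_one (fun z hz => ?_)
    ⟨x, hx, LinearMap.mem_ker.1 (hker ▸ Submodule.mem_span_singleton_self x)⟩
  obtain ⟨c, hc⟩ := Submodule.mem_span_singleton.1 (hker ▸ LinearMap.mem_ker.2 hz)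
  have h : c * (u ⬝ᵥ x) = 0 := by
    rw [← smul_eq_mul, ← dotProduct_smul, hc, dotProduct_mulVec, hu, zero_dotProduct]
  rw [← hc, (mul_eq_zero.1 h).resolve_right hux, zero_smul]

theorem isEigenprojection_smul_vecMulVec {M : Matrix m m ℝ} {x u : m → ℝ}
    (hker : LinearMap.ker M.mulVecLin = ℝ ∙ x) (hx : x ≠ 0) (hu : u ᵥ* M = 0)
    (hux : u ⬝ᵥ x ≠ 0) : IsEigenprojection M ((u ⬝ᵥ x)⁻¹ • vecMulVec x u) := by
  set P := (u ⬝ᵥ x)⁻¹ • vecMulVec x u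
  have hP (z : m → ℝ) : P *ᵥ z = ((u ⬝ᵥ x)⁻¹ * (u ⬝ᵥ z)) • x := by
    rw [smul_mulVec, vecMulVec_mulVec, op_smul_eq_smul, smul_smul]
  have hdot (z : m → ℝ) : u ⬝ᵥ (M *ᵥ z) = 0 := by
    rw [dotProduct_mulVec, hu, zero_dotProduct]
  have hrangeP : LinearMap.range P.mulVecLin = ℝ ∙ x := by
    refine le_antisymm ?_ ?_
    · rintro _ ⟨z, rfl⟩
      exact Submodule.mem_span_singleton.2 ⟨_, (hP z).symm⟩
    · refine Submodule.span_le.2 (Set.singleton_subset_iff.2 ⟨x, ?_⟩)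
      rw [mulVecLin_apply, hP, inv_mul_cancel₀ hux, one_smul]
  have hindex := matIndex_eq_one_of_ker_eq_span hker hx hu hux
  refine ⟨?_, ?_, ?_⟩
  · rw [smul_mul_smul, vecMulVec_mul_vecMulVec, vecMulVec_smul, smul_smul, mul_assoc,
      inv_mul_cancel₀ hux, mul_one]
  · rw [hindex, pow_one, hrangeP, hker]
  · rw [hindex, pow_one]
    refine (Submodule.eq_of_le_of_finrank_eq ?_ ?_).symm
    · rintro _ ⟨z, rfl⟩
      simp only [LinearMap.mem_ker, mulVecLin_apply]
      rw [hP, hdot, mul_zero, zero_smul]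
    · have hM := rank_add_finrank_ker_mulVecLin M
      have hP' := rank_add_finrank_ker_mulVecLin P
      rw [hker, finrank_span_singleton hx] at hM
      rw [Matrix.rank, hrangeP, finrank_span_singleton hx] at hP'
      rw [Matrix.rank] at hM
      omega

end Eigenprojection

noncomputable def scaledResolvent {m : Type*} [Fintype m] [DecidableEq m]
    (L : Matrix m m ℝ) (δ : ℝ) : Matrix m m ℝ :=
  δ • (L + δ • 1)⁻¹

namespace IsLaplacian

variable {m : Type*} [Fintype m] {L : Matrix m m ℝ}

theorem mulVec_one (hL : IsLaplacian L) : L *ᵥ 1 = 0 := by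
  ext i
  simpa [mulVec, dotProduct] using hL.2 i

variable [DecidableEq m]

theorem add_smul_one_mulVec_one (hL : IsLaplacian L) (δ : ℝ) :
    (L + δ • 1) *ᵥ 1 = δ • 1 := by
  rw [add_mulVec, hL.mulVec_one, zero_add, smul_mulVec, one_mulVec]

/-- Diagonal dominance: read at a coordinate where `|x i|` is maximal, the `i`-th row of
`(L + δ) x = δ z` gives `|x i| ≤ |z i|`. -/
theorem norm_le_of_add_smul_one_mulVec_eq (hL : IsLaplacian L) {δ : ℝ}
    (hδ : 0 < δ) {x z : m → ℝ} (h : (L + δ • 1) *ᵥ x = δ • z) : ‖x‖ ≤ ‖z‖ := by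
  rcases isEmpty_or_nonempty m with hm | hm
  · simp [Subsingleton.elim x 0]
  obtain ⟨i, -, hi⟩ :=
    Finset.exists_max_image Finset.univ (fun j => |x j|) Finset.univ_nonempty
  have hrow : ∑ j, L i j * ((x j - x i) * x i) = δ * (z i - x i) * x i := by
    have hrow_i : (L *ᵥ x) i + δ * x i = δ * z i := by
      simpa [add_mulVec, smul_mulVec] using congrFun h i
    calc ∑ j, L i j * ((x j - x i) * x i)
        = (L *ᵥ x) i * x i - (∑ j, L i j) * (x i * x i) := by
          simp only [mulVec, dotProduct, Finset.sum_mul, ← Finset.sum_sub_distrib]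
          exact Finset.sum_congr rfl fun j _ => by ring
      _ = δ * (z i - x i) * x i := by
          rw [hL.2 i]
          linear_combination x i * hrow_i
  have hterm : ∀ j, 0 ≤ L i j * ((x j - x i) * x i) := by
    intro j
    rcases eq_or_ne i j with rfl | hij
    · simp
    have : x j * x i ≤ x i * x i := by
      calc x j * x i ≤ |x j| * |x i| := by rw [← abs_mul]; exact le_abs_self _
        _ ≤ |x i| * |x i| := mul_le_mul_of_nonneg_right (hi j (Finset.mem_univ j)) (abs_nonneg _)
        _ = x i * x i := abs_mul_abs_self _
    exact mul_nonneg_of_nonpos_of_nonpos (hL.1 i j hij) (by nlinarith)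
  have hxi : |x i| ≤ |z i| := by
    have : x i * x i ≤ z i * x i := by
      nlinarith [Finset.sum_nonneg fun j (_ : j ∈ Finset.univ) => hterm j]
    nlinarith [abs_mul_abs_self (x i), abs_mul (z i) (x i), le_abs_self (z i * x i),
      abs_nonneg (x i), abs_nonneg (z i)]
  refine (pi_norm_le_iff_of_nonneg (norm_nonneg z)).2 fun j => ?_
  calc ‖x j‖ ≤ |x i| := hi j (Finset.mem_univ j)
    _ ≤ |z i| := hxi
    _ ≤ ‖z‖ := norm_le_pi_norm z i

theorem isUnit_det_add_smul_one (hL : IsLaplacian L) {δ : ℝ} (hδ : 0 < δ) :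
    IsUnit (L + δ • 1).det := by
  refine isUnit_iff_ne_zero.2 fun hdet => ?_
  obtain ⟨x, hx, hAx⟩ := exists_mulVec_eq_zero_iff.2 hdet
  have := hL.norm_le_of_add_smul_one_mulVec_eq hδ (z := 0) (by rw [hAx, smul_zero])
  exact hx (norm_le_zero_iff.1 (by simpa using this))

/-- With `y = L x` and `L y = 0` one has `(L + δ)(x - y / δ) = δ x`, so `‖y‖ ≤ 2 δ ‖x‖` for
every `δ > 0`. -/
theorem mulVec_eq_zero_of_mulVec_mulVec_eq_zero (hL : IsLaplacian L) {x : m → ℝ}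
    (h : L *ᵥ (L *ᵥ x) = 0) : L *ᵥ x = 0 := by
  set y := L *ᵥ x
  have hbound : ∀ δ > 0, ‖y‖ ≤ δ * (2 * ‖x‖) := by
    intro δ hδ
    have heq : (L + δ • 1) *ᵥ (x - δ⁻¹ • y) = δ • x := by
      rw [add_mulVec, smul_mulVec, one_mulVec, mulVec_sub, mulVec_smul, h, smul_zero, sub_zero,
        smul_sub, smul_smul, mul_inv_cancel₀ hδ.ne', one_smul]
      abel
    have hle := hL.norm_le_of_add_smul_one_mulVec_eq hδ heq
    have : δ⁻¹ * ‖y‖ ≤ 2 * ‖x‖ := by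
      calc δ⁻¹ * ‖y‖ = ‖x - (x - δ⁻¹ • y)‖ := by
            rw [sub_sub_cancel, norm_smul, Real.norm_of_nonneg (inv_nonneg.2 hδ.le)]
        _ ≤ ‖x‖ + ‖x - δ⁻¹ • y‖ := norm_sub_le _ _
        _ ≤ 2 * ‖x‖ := by linarith
    rwa [inv_mul_le_iff₀ hδ] at this
  have hlim : Tendsto (fun δ : ℝ => δ * (2 * ‖x‖)) (𝓝[>] 0) (𝓝 0) :=
    ((continuous_mul_const _).tendsto' 0 0 (zero_mul _)).mono_left nhdsWithin_le_nhds
  exact norm_le_zero_iff.1 (ge_of_tendsto hlim (eventually_nhdsWithin_of_forall hbound))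

theorem matIndex_eq_one [Nonempty m] (hL : IsLaplacian L) : matIndex L = 1 :=
  _root_.matIndex_eq_one (fun _ => hL.mulVec_eq_zero_of_mulVec_mulVec_eq_zero)
    ⟨1, one_ne_zero, hL.mulVec_one⟩

variable {δ : ℝ}

theorem add_smul_one_mul_scaledResolvent (hL : IsLaplacian L) (hδ : 0 < δ) :
    (L + δ • 1) * scaledResolvent L δ = δ • 1 := by
  rw [scaledResolvent, Matrix.mul_smul, mul_nonsing_inv _ (hL.isUnit_det_add_smul_one hδ)]

theorem scaledResolvent_mul_add_smul_one (hL : IsLaplacian L) (hδ : 0 < δ) :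
    scaledResolvent L δ * (L + δ • 1) = δ • 1 := by
  rw [scaledResolvent, Matrix.smul_mul, nonsing_inv_mul _ (hL.isUnit_det_add_smul_one hδ)]

theorem norm_scaledResolvent_mulVec_le (hL : IsLaplacian L) (hδ : 0 < δ) (z : m → ℝ) :
    ‖scaledResolvent L δ *ᵥ z‖ ≤ ‖z‖ :=
  hL.norm_le_of_add_smul_one_mulVec_eq hδ <| by
    rw [mulVec_mulVec, hL.add_smul_one_mul_scaledResolvent hδ, smul_mulVec, one_mulVec]

theorem scaledResolvent_mulVec_of_mulVec_eq_zero (hL : IsLaplacian L) (hδ : 0 < δ)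
    {z : m → ℝ} (hz : L *ᵥ z = 0) : scaledResolvent L δ *ᵥ z = z := by
  have h := congrArg (scaledResolvent L δ *ᵥ ·) (add_mulVec L (δ • 1) z)
  simp only [mulVec_mulVec, hL.scaledResolvent_mul_add_smul_one hδ, hz, smul_mulVec,
    one_mulVec, zero_add, mulVec_smul] at h
  exact smul_right_injective _ hδ.ne' h.symm

theorem scaledResolvent_mulVec_mulVec (hL : IsLaplacian L) (hδ : 0 < δ) (w : m → ℝ) :
    scaledResolvent L δ *ᵥ (L *ᵥ w) = δ • (w - scaledResolvent L δ *ᵥ w) := by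
  have hLw : L *ᵥ w = (L + δ • 1) *ᵥ w - δ • w := by
    rw [add_mulVec, smul_mulVec, one_mulVec, add_sub_cancel_right]
  rw [hLw, mulVec_sub, mulVec_mulVec, hL.scaledResolvent_mul_add_smul_one hδ, smul_mulVec,
    one_mulVec, mulVec_smul, smul_sub]

/-- On `ker L` the scaled resolvent is the identity, and on `range L` it is `O(δ)`; since the
eigenprojection splits every vector along `ker L ⊕ range L`, the limit is `J`. -/
theorem tendsto_scaledResolvent [Nonempty m] (hL : IsLaplacian L) {J : Matrix m m ℝ}
    (hJ : IsEigenprojection L J) : Tendsto (scaledResolvent L) (𝓝[>] 0) (𝓝 J) := by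
  obtain ⟨hJJ, hrange, hker⟩ := hJ
  rw [hL.matIndex_eq_one, pow_one] at hrange hker
  have hvec (z : m → ℝ) :
      Tendsto (fun δ => scaledResolvent L δ *ᵥ z) (𝓝[>] 0) (𝓝 (J *ᵥ z)) := by
    have hLJz : L *ᵥ (J *ᵥ z) = 0 :=
      LinearMap.mem_ker.1 (hrange ▸ LinearMap.mem_range_self J.mulVecLin z)
    obtain ⟨w, hw⟩ : z - J *ᵥ z ∈ LinearMap.range L.mulVecLin := by
      rw [← hker, LinearMap.mem_ker, mulVecLin_apply, mulVec_sub, mulVec_mulVec, hJJ, sub_self]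
    have hdist : ∀ δ > 0, ‖scaledResolvent L δ *ᵥ z - J *ᵥ z‖ ≤ δ * (2 * ‖w‖) := by
      intro δ hδ
      have hRz : scaledResolvent L δ *ᵥ z = J *ᵥ z + δ • (w - scaledResolvent L δ *ᵥ w) := by
        rw [mulVecLin_apply] at hw
        conv_lhs => rw [← add_sub_cancel (J *ᵥ z) z, ← hw]
        rw [mulVec_add, hL.scaledResolvent_mulVec_of_mulVec_eq_zero hδ hLJz,
          hL.scaledResolvent_mulVec_mulVec hδ]
      rw [hRz, add_sub_cancel_left, norm_smul, Real.norm_of_nonneg hδ.le, two_mul]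
      gcongr
      exact (norm_sub_le _ _).trans (by linarith [hL.norm_scaledResolvent_mulVec_le hδ w])
    have hlim : Tendsto (fun δ : ℝ => δ * (2 * ‖w‖)) (𝓝[>] 0) (𝓝 0) :=
      ((continuous_mul_const _).tendsto' 0 0 (zero_mul _)).mono_left nhdsWithin_le_nhds
    exact tendsto_iff_norm_sub_tendsto_zero.2
      (squeeze_zero_norm' (eventually_nhdsWithin_of_forall fun δ hδ => by
        simpa using hdist δ hδ) hlim)
  refine tendsto_pi_nhds.2 fun i => tendsto_pi_nhds.2 fun j => ?_
  simpa [mulVec_single_one, Function.comp_def] using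
    ((continuous_apply i).tendsto _).comp (hvec (Pi.single j 1))

end IsLaplacian

section Hub

variable {n : ℕ}

theorem hubL0_add_hubH_mulVec (L : Matrix (Fin n) (Fin n) ℝ) (δ : ℝ) (v : Fin n → ℝ)
    (x : Fin n ⊕ Unit → ℝ) :
    (hubL0 L + hubH δ v) *ᵥ x = Sum.elim
      ((L + δ • 1) *ᵥ (x ∘ Sum.inl) - (δ * x (Sum.inr ())) • 1)
      (fun _ => (∑ i, v i) * x (Sum.inr ()) - v ⬝ᵥ (x ∘ Sum.inl)) := by
  ext (i | _) <;> simp [hubL0, hubH, hubHI, hubHv, mulVec, dotProduct, Fintype.sum_sum_type] <;>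
    ring

theorem vecMul_hubL0_add_hubH (L : Matrix (Fin n) (Fin n) ℝ) (δ : ℝ) (v : Fin n → ℝ)
    (u : Fin n ⊕ Unit → ℝ) :
    u ᵥ* (hubL0 L + hubH δ v) = Sum.elim
      ((u ∘ Sum.inl) ᵥ* (L + δ • 1) - u (Sum.inr ()) • v)
      (fun _ => (∑ i, v i) * u (Sum.inr ()) - δ * ∑ i, u (Sum.inl i)) := by
  ext (j | _) <;> simp [hubL0, hubH, hubHI, hubHv, vecMul, dotProduct, Fintype.sum_sum_type,
    ← Finset.sum_mul] <;> ring

/-- A left null vector of `L₀ + H_{δ,v}`, namely `(δ / s) [vᵀ(L + δ)⁻¹, 1]`, scaled so that it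
converges as `δ → 0⁺`. -/
noncomputable def hubLeftNullVec (L : Matrix (Fin n) (Fin n) ℝ) (δ : ℝ) (v : Fin n → ℝ) :
    Fin n ⊕ Unit → ℝ :=
  Sum.elim (((∑ i, v i)⁻¹ • v) ᵥ* scaledResolvent L δ) fun _ => δ / ∑ i, v i

variable {L : Matrix (Fin n) (Fin n) ℝ} {δ : ℝ} {v : Fin n → ℝ}

theorem IsLaplacian.ker_hubL0_add_hubH (hL : IsLaplacian L) (hδ : 0 < δ) :
    LinearMap.ker (hubL0 L + hubH δ v).mulVecLin = ℝ ∙ 1 := by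
  refine le_antisymm (fun x hx => ?_) ?_
  · have hx i := congrFun (LinearMap.mem_ker.1 hx) (Sum.inl i)
    simp only [mulVecLin_apply, hubL0_add_hubH_mulVec, Sum.elim_inl, Pi.zero_apply] at hx
    have hinl : x ∘ Sum.inl = x (Sum.inr ()) • 1 := by
      refine (mulVec_injective_iff_isUnit.2 ((isUnit_iff_isUnit_det _).2
        (hL.isUnit_det_add_smul_one hδ))) ?_
      rw [mulVec_smul, hL.add_smul_one_mulVec_one, smul_smul, mul_comm]
      exact sub_eq_zero.1 (funext hx)
    refine Submodule.mem_span_singleton.2 ⟨x (Sum.inr ()), ?_⟩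
    ext (i | _)
    · simpa using (congrFun hinl i).symm
    · simp
  · rw [Submodule.span_le, Set.singleton_subset_iff, SetLike.mem_coe, LinearMap.mem_ker,
      mulVecLin_apply, hubL0_add_hubH_mulVec]
    ext (i | _) <;> simp [hL.add_smul_one_mulVec_one, dotProduct_one]

theorem IsLaplacian.sum_hubLeftNullVec_inl (hL : IsLaplacian L) (hδ : 0 < δ)
    (hs : ∑ i, v i ≠ 0) : ∑ i, hubLeftNullVec L δ v (Sum.inl i) = 1 := by
  simp only [hubLeftNullVec, Sum.elim_inl]
  rw [← dotProduct_one, ← dotProduct_mulVec,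
    hL.scaledResolvent_mulVec_of_mulVec_eq_zero hδ hL.mulVec_one, dotProduct_one]
  simp only [Pi.smul_apply, smul_eq_mul, ← Finset.mul_sum, inv_mul_cancel₀ hs]

theorem IsLaplacian.hubLeftNullVec_vecMul_hubL0_add_hubH (hL : IsLaplacian L) (hδ : 0 < δ)
    (hs : ∑ i, v i ≠ 0) : hubLeftNullVec L δ v ᵥ* (hubL0 L + hubH δ v) = 0 := by
  rw [vecMul_hubL0_add_hubH, hL.sum_hubLeftNullVec_inl hδ hs]
  ext (j | _)
  · simp [hubLeftNullVec, vecMul_vecMul, hL.scaledResolvent_mul_add_smul_one hδ, vecMul_smul]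
    ring
  · simp only [hubLeftNullVec, Sum.elim_inr, Pi.zero_apply]
    field_simp
    ring

theorem IsLaplacian.hubLeftNullVec_dotProduct_one (hL : IsLaplacian L) (hδ : 0 < δ)
    (hs : ∑ i, v i ≠ 0) : hubLeftNullVec L δ v ⬝ᵥ 1 = 1 + δ / ∑ i, v i := by
  rw [dotProduct_one, Fintype.sum_sum_type, hL.sum_hubLeftNullVec_inl hδ hs]
  simp [hubLeftNullVec]

theorem IsLaplacian.isEigenprojection_hubL0_add_hubH (hL : IsLaplacian L) (hδ : 0 < δ)
    (hs : 0 < ∑ i, v i) : IsEigenprojection (hubL0 L + hubH δ v)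
      ((1 + δ / ∑ i, v i)⁻¹ • vecMulVec 1 (hubLeftNullVec L δ v)) := by
  have hdot := hL.hubLeftNullVec_dotProduct_one (v := v) hδ hs.ne'
  have h := isEigenprojection_smul_vecMulVec (hL.ker_hubL0_add_hubH hδ) one_ne_zero
    (hL.hubLeftNullVec_vecMul_hubL0_add_hubH hδ hs.ne') (by rw [hdot]; positivity)
  rwa [hdot] at h

end Hub

theorem eigenprojection_subordinate_hub_general {n : ℕ} (L J : Matrix (Fin n) (Fin n) ℝ)
    (hL : IsLaplacian L) (hJ : IsEigenprojection L J)
    (v : ℝ → Fin n → ℝ)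
    (hs : ∀ δ : ℝ, 0 < δ → 0 < ∑ i, v δ i)
    (hds : Tendsto (fun δ : ℝ => δ / ∑ i, v δ i) (𝓝[>] 0) (𝓝 0))
    (vt : Fin n → ℝ)
    (hvt : Tendsto (fun δ : ℝ => (∑ i, v δ i)⁻¹ • v δ) (𝓝[>] 0) (𝓝 vt))
    (Q : ℝ → Matrix (Fin n ⊕ Unit) (Fin n ⊕ Unit) ℝ)
    (hQ : ∀ δ : ℝ, 0 < δ → IsEigenprojection (hubL0 L + hubH δ (v δ)) (Q δ)) :
    Tendsto Q (𝓝[>] 0)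
      (𝓝 (Matrix.vecMulVec (fun _ => (1 : ℝ))
        (Sum.elim (fun j => (vt ᵥ* J) j) (fun _ => 0)))) := by
  have : Nonempty (Fin n) := by
    refine Fin.pos_iff_nonempty.1 (Nat.pos_of_ne_zero fun hn => ?_)
    subst hn
    simpa using hs 1 one_pos
  have hQ_eq : Q =ᶠ[𝓝[>] 0]
      fun δ => (1 + δ / ∑ i, v δ i)⁻¹ • vecMulVec 1 (hubLeftNullVec L δ (v δ)) :=
    eventually_nhdsWithin_of_forall fun δ hδ =>
      (hQ δ hδ).unique (hL.isEigenprojection_hubL0_add_hubH hδ (hs δ hδ))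
  have hcoef : Tendsto (fun δ => (1 + δ / ∑ i, v δ i)⁻¹) (𝓝[>] 0) (𝓝 1) := by
    simpa using (tendsto_const_nhds.add hds).inv₀ (by norm_num : (1 : ℝ) + 0 ≠ 0)
  have hnull : Tendsto (fun δ => hubLeftNullVec L δ (v δ)) (𝓝[>] 0)
      (𝓝 (Sum.elim (vt ᵥ* J) 0)) := by
    refine tendsto_pi_nhds.2 ?_
    rintro (j | _)
    · exact ((continuous_apply j).tendsto _).comp <|
        ((continuous_fst.matrix_vecMul continuous_snd).tendsto _).comp
          (hvt.prodMk_nhds (hL.tendsto_scaledResolvent hJ))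
    · exact hds
  refine Tendsto.congr' hQ_eq.symm ?_
  have hrankOne : Tendsto (fun δ => vecMulVec 1 (hubLeftNullVec L δ (v δ))) (𝓝[>] 0)
      (𝓝 (vecMulVec (1 : Fin n ⊕ Unit → ℝ) (Sum.elim (vt ᵥ* J) 0))) :=
    ((continuous_const.matrix_vecMulVec continuous_id).tendsto _).comp hnull
  have h := hcoef.smul hrankOne
  rw [one_smul] at h
  exact h

/-- A hub subordinate to the agents: if `δ/s(δ) → 0` and `v(δ)/s(δ) → ṽ` as
`δ → 0⁺`, then the eigenprojection of `L₀ + H_{δ,v(δ)}` converges to the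
rank-one matrix `1′·[ṽᵀJ̄  0]`, where `J̄ = L^⊢`. -/
theorem eigenprojection_subordinate_hub {n : ℕ} (L J : Matrix (Fin n) (Fin n) ℝ)
    (hL : IsLaplacian L) (hJ : IsEigenprojection L J)
    (v : ℝ → Fin n → ℝ) (hv : ∀ δ : ℝ, 0 < δ → ∀ i, 0 ≤ v δ i)
    (hs : ∀ δ : ℝ, 0 < δ → 0 < ∑ i, v δ i)
    (hds : Tendsto (fun δ : ℝ => δ / ∑ i, v δ i) (𝓝[>] 0) (𝓝 0))
    (vt : Fin n → ℝ)
    (hvt : Tendsto (fun δ : ℝ => (∑ i, v δ i)⁻¹ • v δ) (𝓝[>] 0) (𝓝 vt))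
    (Q : ℝ → Matrix (Fin n ⊕ Unit) (Fin n ⊕ Unit) ℝ)
    (hQ : ∀ δ : ℝ, 0 < δ → IsEigenprojection (hubL0 L + hubH δ (v δ)) (Q δ)) :
    Tendsto Q (𝓝[>] 0)
      (𝓝 (Matrix.vecMulVec (fun _ => (1 : ℝ))
        (Sum.elim (fun j => (vt ᵥ* J) j) (fun _ => 0)))) :=
  eigenprojection_subordinate_hub_general L J hL hJ v hs hds vt hvt Q hQ
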